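/- In the curved 5-body problem on the sphere of curvature 1 (stereographic model), consider 5 collinear bodies with masses m₁ = μ > 0, m₂ = m₃ = 1, m₄ = m₅ = m > 0 at positions z₁ = 0, z₂ = −z₃ = a, z₄ = −z₅ = r with 0 < a < r < 1. Then the relative-equilibrium condition for body 4, namely (1/2)(a²+1)²[1/((ar+1)²(a−r)²) + 1/((r+a)²(ar−1)²)] − (1−r²)r/(1+r²)⁴ = −(1/2)μ/r² − (1/8)m(r²+1)²/(r²(r²−1)²), has no solution with μ > 0 and m > 0. -/
import Mathlib

set_option maxHeartbeats 1000000

private lemma aux_lhs_pos (a r : ℝ) (ha : 0 < a) (har : a < r) (hr : r < 1) :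
    0 < (1/2) * (a^2+1)^2 * (1/((a*r+1)^2*(a-r)^2) + 1/((r+a)^2*(a*r-1)^2))
        - (1-r^2)*r/(1+r^2)^4 := by
  have hr0 : 0 < r := ha.trans har
  have ha1 : a < 1 := har.trans hr
  have har1 : a * r < 1 := by nlinarith
  have hr2 : (0:ℝ) < r^2 := by positivity
  have harpos : (0:ℝ) < (a*r+1)^2 := by positivity
  have hsq1 : (0:ℝ) < (a-r)^2 := by
    have h1 : (0:ℝ) < r - a := by linarith
    nlinarith [mul_pos h1 h1]
  have hsq2 : (0:ℝ) < (a*r-1)^2 := by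
    have h1 : (0:ℝ) < 1 - a*r := by linarith
    nlinarith [mul_pos h1 h1]
  have hrapos : (0:ℝ) < (r+a)^2 := by positivity
  have hA : (0:ℝ) < (a*r+1)^2*(a-r)^2 := mul_pos harpos hsq1
  have hB : (0:ℝ) < (r+a)^2*(a*r-1)^2 := mul_pos hrapos hsq2
  have p1 : (a*r+1)^2 < 4 := by
    have h1 : (0:ℝ) < 2 - (a*r+1) := by linarith
    have h2 : (0:ℝ) < 2 + (a*r+1) := by nlinarith
    nlinarith [mul_pos h1 h2]
  have p2 : (a-r)^2 < r^2 := by nlinarith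
  have p3 : (a*r-1)^2 < 1 := by
    have h1 : (0:ℝ) < 1 - (a*r-1) := by linarith
    have h2 : (0:ℝ) < 1 + (a*r-1) := by nlinarith
    nlinarith [mul_pos h1 h2]
  have p4 : (r+a)^2 < 4*r^2 := by
    have h1 : (0:ℝ) < 2*r - (r+a) := by linarith
    have h2 : (0:ℝ) < 2*r + (r+a) := by linarith
    nlinarith [mul_pos h1 h2]
  have hAlt : (a*r+1)^2*(a-r)^2 < 4*r^2 := by
    calc (a*r+1)^2*(a-r)^2 < 4*(a-r)^2 := mul_lt_mul_of_pos_right p1 hsq1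
      _ < 4*r^2 := by linarith
  have hBlt : (r+a)^2*(a*r-1)^2 < 4*r^2 := by
    calc (r+a)^2*(a*r-1)^2 < (r+a)^2*1 := mul_lt_mul_of_pos_left p3 hrapos
      _ = (r+a)^2 := by ring
      _ < 4*r^2 := p4
  have h4r : (0:ℝ) < 4*r^2 := by positivity
  have hA' : 1/(4*r^2) < 1/((a*r+1)^2*(a-r)^2) := one_div_lt_one_div_of_lt hA hAlt
  have hB' : 1/(4*r^2) < 1/((r+a)^2*(a*r-1)^2) := one_div_lt_one_div_of_lt hB hBlt
  have hcoef : (1:ℝ) ≤ (a^2+1)^2 := by nlinarith [sq_nonneg a]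
  have hspos : (0:ℝ) < 1/((a*r+1)^2*(a-r)^2) + 1/((r+a)^2*(a*r-1)^2) := by positivity
  have hmain : 1/(4*r^2) + 1/(4*r^2) ≤ (1/2) * (a^2+1)^2 *
      (1/((a*r+1)^2*(a-r)^2) + 1/((r+a)^2*(a*r-1)^2)) * 2 := by
    have hmul : (1:ℝ) * (1/((a*r+1)^2*(a-r)^2) + 1/((r+a)^2*(a*r-1)^2))
        ≤ (a^2+1)^2 * (1/((a*r+1)^2*(a-r)^2) + 1/((r+a)^2*(a*r-1)^2)) :=
      mul_le_mul_of_nonneg_right hcoef hspos.le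
    linarith only [hA', hB', hmul]
  have hb : (1:ℝ) + 4*r^2 ≤ (1+r^2)^4 := by
    nlinarith [sq_nonneg (r^2), sq_nonneg (r^3), sq_nonneg (r^4)]
  have hf : (1-r^2)*r/(1+r^2)^4 < 1/4 := by
    rw [div_lt_iff₀ (by positivity)]
    nlinarith [hb, sq_nonneg (1-2*r), pow_pos hr0 3]
  have hquarter : (1:ℝ)/4 ≤ 1/(4*r^2) := by
    rw [div_le_div_iff₀ (by norm_num) h4r]
    nlinarith
  linarith only [hmain, hf, hquarter]

private lemma aux_rhs_neg (r μ m : ℝ) (hr0 : 0 < r) (hr : r < 1)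
    (hμ : 0 < μ) (hm : 0 < m) :
    -(1/2)*μ/r^2 - (1/8)*m*(r^2+1)^2/(r^2*(r^2-1)^2) < 0 := by
  have hr2 : (0:ℝ) < r^2 := by positivity
  have hrne : (0:ℝ) < (r^2 - 1)^2 := by
    have h1 : (0:ℝ) < 1 - r^2 := by nlinarith
    nlinarith [mul_pos h1 h1]
  have hX : (0:ℝ) < (1/2)*μ/r^2 := div_pos (by positivity) hr2
  have hY : (0:ℝ) < (1/8)*m*(r^2+1)^2/(r^2*(r^2-1)^2) :=
    div_pos (by positivity) (mul_pos hr2 hrne)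
  have h : -(1/2)*μ/r^2 - (1/8)*m*(r^2+1)^2/(r^2*(r^2-1)^2)
      = -((1/2)*μ/r^2 + (1/8)*m*(r^2+1)^2/(r^2*(r^2-1)^2)) := by ring
  rw [h]
  linarith only [hX, hY]

theorem stmt_10 (a r μ m : ℝ) (ha : 0 < a) (har : a < r) (hr : r < 1)
    (hμ : 0 < μ) (hm : 0 < m) :
    (1/2) * (a^2+1)^2 * (1/((a*r+1)^2*(a-r)^2) + 1/((r+a)^2*(a*r-1)^2))
        - (1-r^2)*r/(1+r^2)^4
      ≠ -(1/2)*μ/r^2 - (1/8)*m*(r^2+1)^2/(r^2*(r^2-1)^2) := by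
  have h1 := aux_lhs_pos a r ha har hr
  have h2 := aux_rhs_neg r μ m (ha.trans har) hr hμ hm
  intro heq
  rw [heq] at h1
  linarith only [h1, h2]
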